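/- Let d ≥ 1, let Δ ⊆ ℝ^d be a reflexive polytope, and let Δ = Δ_1 + … + Δ_r be a nef partition: each Δ_i is a lattice polytope containing 0, and Δ_i ∩ Δ_j = {0} for i ≠ j. For each i let E_i be the set of extreme points e of Δ* with min_{x ∈ Δ_i} ⟨x, e⟩ = -1, and let ∇_i be the convex hull of E_i ∪ {0}. Then for each j, ∇_j = {y ∈ ℝ^d : ⟨x, y⟩ ≥ -1 for all x ∈ Δ_j, and ⟨x, y⟩ ≥ 0 for all x ∈ Δ_i with i ≠ j}; that is, ∇_j is maximal among sets satisfying the pairing inequalities ⟨Δ_i, ∇_j⟩ ≥ -δ_{ij}. -/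

import Mathlib

/-!
Write `f i z = min_{x ∈ Δ_i} ⟨x, z⟩`. Each `f i` is concave and `≤ 0`, their sum is
`min_{x ∈ Δ} ⟨x, z⟩`, and `Δ* = {z | -1 ≤ ∑ i, f i z}`. The right-hand side is
`{y | -1 ≤ f j y ∧ ∀ i ≠ j, 0 ≤ f i y}`: a convex set containing `0` and `E_j` (on `Δ*`,
`f j e = -1` forces the other `f i e` to vanish), hence containing `∇_j`.
Conversely, for `y ≠ 0` in it, `f j y = min_Δ ⟨·, y⟩ < 0` because `0` is interior to `Δ`,
so `y' = y / |f j y|` lies in `Δ*` with `f j y' = -1`. As `f j ≥ -1` on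
`Δ* = conv (ext Δ*)`, Jensen's inequality forces every extreme point carrying weight in a
representation of `y'` to have `f j = -1`, i.e. to lie in `E_j`. Thus `y' ∈ conv E_j`, and
`y` lies between `0` and `y'`.
-/

open Pointwise

/-- The standard inner product on `ℝ^d`. -/
def dotp {d : ℕ} (x y : Fin d → ℝ) : ℝ := ∑ i, x i * y i

/-- A point of `ℝ^d` with integer coordinates (a lattice point of `ℤ^d`). -/
def IsLatticePt {d : ℕ} (x : Fin d → ℝ) : Prop := ∀ i, ∃ n : ℤ, x i = (n : ℝ)

/-- A lattice polytope: the convex hull of a finite set of lattice points. -/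
def IsLatticePolytope {d : ℕ} (P : Set (Fin d → ℝ)) : Prop :=
  ∃ S : Finset (Fin d → ℝ), (∀ x ∈ S, IsLatticePt x) ∧ P = convexHull ℝ (S : Set (Fin d → ℝ))

/-- The dual set `A* = {x : ⟨y,x⟩ ≥ -1 ∀ y ∈ A}`. -/
def dualSet {d : ℕ} (A : Set (Fin d → ℝ)) : Set (Fin d → ℝ) :=
  {x | ∀ y ∈ A, -1 ≤ dotp y x}

/-- A reflexive polytope: a lattice polytope with `0` in its interior whose dual is
also a lattice polytope. -/
def IsReflexivePolytope {d : ℕ} (P : Set (Fin d → ℝ)) : Prop :=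
  IsLatticePolytope P ∧ (0 : Fin d → ℝ) ∈ interior P ∧ IsLatticePolytope (dualSet P)

/-- The minimum (infimum) of `⟨x, z⟩` over `x ∈ A`. -/
noncomputable def minDot {d : ℕ} (A : Set (Fin d → ℝ)) (z : Fin d → ℝ) : ℝ :=
  sInf ((fun x => dotp x z) '' A)

open Filter Topology

section Dotp

variable {d : ℕ}

theorem continuous_dotp_left (z : Fin d → ℝ) : Continuous fun x : Fin d → ℝ => dotp x z :=
  continuous_finsetSum _ fun i _ => (continuous_apply i).mul continuous_const

theorem dotp_zero_left (z : Fin d → ℝ) : dotp 0 z = 0 := zero_dotProduct z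

theorem dotp_zero_right (x : Fin d → ℝ) : dotp x 0 = 0 := dotProduct_zero x

theorem dotp_add_right (x y z : Fin d → ℝ) : dotp x (y + z) = dotp x y + dotp x z :=
  dotProduct_add x y z

theorem dotp_smul_left (c : ℝ) (x z : Fin d → ℝ) : dotp (c • x) z = c * dotp x z :=
  smul_dotProduct c x z

theorem dotp_smul_right (c : ℝ) (x z : Fin d → ℝ) : dotp x (c • z) = c * dotp x z :=
  dotProduct_smul c x z

theorem dotp_sum_left {ι : Type*} (s : Finset ι) (x : ι → Fin d → ℝ) (z : Fin d → ℝ) :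
    dotp (∑ i ∈ s, x i) z = ∑ i ∈ s, dotp (x i) z :=
  sum_dotProduct s x z

theorem dotp_self_pos {z : Fin d → ℝ} (hz : z ≠ 0) : 0 < dotp z z :=
  (Fintype.sum_nonneg fun i => mul_self_nonneg (z i)).lt_of_ne
    (Ne.symm (dotProduct_self_eq_zero.not.2 hz))

end Dotp

section MinDot

variable {d : ℕ} {A : Set (Fin d → ℝ)}

theorem IsCompact.bddBelow_image_dotp (hA : IsCompact A) (z : Fin d → ℝ) :
    BddBelow ((fun x => dotp x z) '' A) :=
  hA.bddBelow_image (continuous_dotp_left z).continuousOn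

theorem minDot_le (hA : IsCompact A) {x : Fin d → ℝ} (hx : x ∈ A) (z : Fin d → ℝ) :
    minDot A z ≤ dotp x z :=
  csInf_le (hA.bddBelow_image_dotp z) ⟨x, hx, rfl⟩

theorem minDot_nonpos (hA : IsCompact A) (h0 : (0 : Fin d → ℝ) ∈ A) (z : Fin d → ℝ) :
    minDot A z ≤ 0 :=
  (minDot_le hA h0 z).trans_eq (dotp_zero_left z)

theorem le_minDot_iff (hA : IsCompact A) (hne : A.Nonempty) {c : ℝ} {z : Fin d → ℝ} :
    c ≤ minDot A z ↔ ∀ x ∈ A, c ≤ dotp x z := by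
  rw [minDot, le_csInf_iff (hA.bddBelow_image_dotp z) (hne.image _), Set.forall_mem_image]

theorem mem_dualSet_iff (hA : IsCompact A) (hne : A.Nonempty) {z : Fin d → ℝ} :
    z ∈ dualSet A ↔ -1 ≤ minDot A z :=
  (le_minDot_iff hA hne).symm

theorem exists_dotp_eq_minDot (hA : IsCompact A) (hne : A.Nonempty) (z : Fin d → ℝ) :
    ∃ x ∈ A, dotp x z = minDot A z :=
  (hA.image (continuous_dotp_left z)).sInf_mem (hne.image _)

theorem minDot_zero (hne : A.Nonempty) : minDot A 0 = 0 := by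
  simp only [minDot, dotp_zero_right, hne.image_const, csInf_singleton]

theorem minDot_smul {c : ℝ} (hc : 0 ≤ c) (z : Fin d → ℝ) :
    minDot A (c • z) = c * minDot A z := by
  simp only [minDot, dotp_smul_right]
  rw [← smul_eq_mul, ← Real.sInf_smul_of_nonneg hc, ← Set.image_smul, Set.image_image]
  rfl

theorem concaveOn_minDot (hA : IsCompact A) (hne : A.Nonempty) :
    ConcaveOn ℝ Set.univ (minDot A) := by
  refine ⟨convex_univ, fun y _ z _ a b ha hb _ => (le_minDot_iff hA hne).2 fun x hx => ?_⟩
  rw [dotp_add_right, dotp_smul_right, dotp_smul_right, smul_eq_mul, smul_eq_mul]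
  exact add_le_add (mul_le_mul_of_nonneg_left (minDot_le hA hx y) ha)
    (mul_le_mul_of_nonneg_left (minDot_le hA hx z) hb)

theorem minDot_neg_of_zero_mem_interior (hA : IsCompact A)
    (h0 : (0 : Fin d → ℝ) ∈ interior A) {z : Fin d → ℝ} (hz : z ≠ 0) : minDot A z < 0 := by
  have hlim : Tendsto (fun c : ℝ => (-c) • z) (𝓝[>] 0) (𝓝 0) :=
    ((continuous_neg.smul continuous_const).tendsto' 0 0 (by simp)).mono_left nhdsWithin_le_nhds
  obtain ⟨c, hcA, hc⟩ :=
    ((hlim.eventually (mem_interior_iff_mem_nhds.mp h0)).and self_mem_nhdsWithin).exists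
  calc minDot A z ≤ dotp ((-c) • z) z := minDot_le hA hcA z
    _ = -c * dotp z z := dotp_smul_left _ _ _
    _ < 0 := mul_neg_of_neg_of_pos (neg_neg_of_pos hc) (dotp_self_pos hz)

theorem minDot_sum {ι : Type*} [Fintype ι] {D : ι → Set (Fin d → ℝ)}
    (hD : ∀ i, IsCompact (D i)) (hne : ∀ i, (D i).Nonempty) (z : Fin d → ℝ) :
    minDot (∑ i, D i) z = ∑ i, minDot (D i) z := by
  choose x hx hxz using fun i => exists_dotp_eq_minDot (hD i) (hne i) z
  refine IsLeast.csInf_eq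
    ⟨⟨∑ i, x i, (Set.mem_fintype_sum _ _).2 ⟨x, hx, rfl⟩, ?_⟩, ?_⟩
  · simp only [dotp_sum_left, hxz]
  · rintro _ ⟨_, hmem, rfl⟩
    obtain ⟨y, hy, rfl⟩ := (Set.mem_fintype_sum _ _).1 hmem
    show _ ≤ dotp (∑ i, y i) z
    rw [dotp_sum_left]
    exact Finset.sum_le_sum fun i _ => minDot_le (hD i) (hy i) z

end MinDot

theorem Finset.sum_le_sum_of_subset_of_nonpos {ι M : Type*} [AddCommGroup M] [PartialOrder M]
    [IsOrderedAddMonoid M] {s t : Finset ι} {f : ι → M} (h : s ⊆ t)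
    (hf : ∀ i ∈ t, i ∉ s → f i ≤ 0) : ∑ i ∈ t, f i ≤ ∑ i ∈ s, f i := by
  simpa using Finset.sum_le_sum_of_subset_of_nonneg (f := fun i => -f i) h
    fun i hi his => neg_nonneg.2 (hf i hi his)

theorem mem_convexHull_setOf_eq_of_concaveOn {E : Type*} [AddCommGroup E] [Module ℝ E]
    {S : Set E} {φ : E → ℝ} (hφ : ConcaveOn ℝ (convexHull ℝ S) φ) {c : ℝ}
    (hS : ∀ e ∈ S, c ≤ φ e) {y : E} (hy : y ∈ convexHull ℝ S) (hyc : φ y ≤ c) :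
    y ∈ convexHull ℝ {e ∈ S | φ e = c} := by
  classical
  obtain ⟨ι, t, w, z, hw0, hw1, hzS, rfl⟩ := (convexHull_eq S).subset hy
  have hjensen : ∑ i ∈ t, w i * φ (z i) ≤ φ (t.centerMass w z) := by
    simpa [Finset.centerMass_eq_of_sum_1 _ _ hw1] using
      hφ.le_map_centerMass hw0 (hw1 ▸ zero_lt_one) fun i hi => subset_convexHull ℝ S (hzS i hi)
  have htight : ∀ i ∈ t, w i * c = w i * φ (z i) := by
    refine (Finset.sum_eq_sum_iff_of_le fun i hi =>
      mul_le_mul_of_nonneg_left (hS _ (hzS i hi)) (hw0 i hi)).1 (le_antisymm ?_ ?_)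
    · exact Finset.sum_le_sum fun i hi => mul_le_mul_of_nonneg_left (hS _ (hzS i hi)) (hw0 i hi)
    · rw [← Finset.sum_mul, hw1, one_mul]
      exact hjensen.trans hyc
  rw [← Finset.centerMass_filter_ne_zero]
  refine Finset.centerMass_mem_convexHull _ (fun i hi => hw0 i (Finset.mem_filter.1 hi).1) ?_
    fun i hi => ?_
  · rw [Finset.sum_filter_ne_zero, hw1]
    exact zero_lt_one
  · obtain ⟨hit, hwi⟩ := Finset.mem_filter.1 hi
    exact ⟨hzS i hit, (mul_left_cancel₀ hwi (htight i hit)).symm⟩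

theorem IsLatticePolytope.convexHull_extremePoints {d : ℕ} {P : Set (Fin d → ℝ)}
    (hP : IsLatticePolytope P) : convexHull ℝ (P.extremePoints ℝ) = P := by
  obtain ⟨S, -, rfl⟩ := hP
  have hfin : ((convexHull ℝ (S : Set (Fin d → ℝ))).extremePoints ℝ).Finite :=
    S.finite_toSet.subset extremePoints_convexHull_subset
  rw [← (hfin.isClosed_convexHull (𝕜 := ℝ)).closure_eq]
  exact closure_convexHull_extremePoints (S.finite_toSet.isCompact_convexHull ℝ)
    (convex_convexHull ℝ _)

theorem IsLatticePolytope.isCompact {d : ℕ} {P : Set (Fin d → ℝ)} (hP : IsLatticePolytope P) :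
    IsCompact P := by
  obtain ⟨S, -, rfl⟩ := hP
  exact S.finite_toSet.isCompact_convexHull ℝ

section NefPartition

variable {d : ℕ} {ι : Type*} {D : ι → Set (Fin d → ℝ)}

def maximalNabla (D : ι → Set (Fin d → ℝ)) (j : ι) : Set (Fin d → ℝ) :=
  {y | -1 ≤ minDot (D j) y ∧ ∀ i, i ≠ j → 0 ≤ minDot (D i) y}

theorem setOf_pairing_eq_maximalNabla (hD : ∀ i, IsCompact (D i))
    (hne : ∀ i, (D i).Nonempty) (j : ι) :
    {y : Fin d → ℝ | (∀ x ∈ D j, -1 ≤ dotp x y) ∧ ∀ i, i ≠ j → ∀ x ∈ D i, 0 ≤ dotp x y} =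
      maximalNabla D j := by
  ext y
  simp only [maximalNabla, Set.mem_ofPred_eq, le_minDot_iff (hD _) (hne _)]

theorem convex_maximalNabla (hD : ∀ i, IsCompact (D i)) (hne : ∀ i, (D i).Nonempty) (j : ι) :
    Convex ℝ (maximalNabla D j) := by
  intro y hy z hz a b ha hb hab
  have hconc i := (concaveOn_minDot (hD i) (hne i)).2 (Set.mem_univ y) (Set.mem_univ z) ha hb hab
  simp only [smul_eq_mul] at hconc
  refine ⟨(hconc j).trans' ?_, fun i hij => (hconc i).trans' ?_⟩
  · nlinarith [hy.1, hz.1]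
  · exact add_nonneg (mul_nonneg ha (hy.2 i hij)) (mul_nonneg hb (hz.2 i hij))

theorem zero_mem_maximalNabla (hne : ∀ i, (D i).Nonempty) (j : ι) : 0 ∈ maximalNabla D j := by
  simp only [maximalNabla, Set.mem_ofPred_eq, minDot_zero (hne _)]
  exact ⟨by norm_num, fun _ _ => le_rfl⟩

variable [Fintype ι]

theorem minDot_sum_le_sum_minDot (hD : ∀ i, IsCompact (D i))
    (h0 : ∀ i, (0 : Fin d → ℝ) ∈ D i) (s : Finset ι) (z : Fin d → ℝ) :
    minDot (∑ i, D i) z ≤ ∑ i ∈ s, minDot (D i) z := by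
  rw [minDot_sum hD fun i => ⟨0, h0 i⟩]
  exact Finset.sum_le_sum_of_subset_of_nonpos (Finset.subset_univ s) fun i _ _ =>
    minDot_nonpos (hD i) (h0 i) z

theorem minDot_sum_eq_of_nonneg (hD : ∀ i, IsCompact (D i)) (h0 : ∀ i, (0 : Fin d → ℝ) ∈ D i)
    {j : ι} {z : Fin d → ℝ} (hz : ∀ i, i ≠ j → 0 ≤ minDot (D i) z) :
    minDot (∑ i, D i) z = minDot (D j) z := by
  rw [minDot_sum hD fun i => ⟨0, h0 i⟩]
  exact Finset.sum_eq_single j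
    (fun i _ hij => (minDot_nonpos (hD i) (h0 i) z).antisymm (hz i hij))
    (absurd (Finset.mem_univ j))

theorem mem_maximalNabla_of_minDot_eq_neg_one (hD : ∀ i, IsCompact (D i))
    (h0 : ∀ i, (0 : Fin d → ℝ) ∈ D i) {j : ι} {e : Fin d → ℝ}
    (he : -1 ≤ minDot (∑ i, D i) e) (hej : minDot (D j) e = -1) : e ∈ maximalNabla D j := by
  classical
  refine ⟨hej.ge, fun i hij => ?_⟩
  have hpair := minDot_sum_le_sum_minDot hD h0 {i, j} e
  rw [Finset.sum_pair hij, hej] at hpair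
  linarith

theorem convexHull_subset_maximalNabla (hD : ∀ i, IsCompact (D i))
    (h0 : ∀ i, (0 : Fin d → ℝ) ∈ D i) (hΔ : IsCompact (∑ i, D i)) (j : ι) :
    convexHull ℝ ({e ∈ (dualSet (∑ i, D i)).extremePoints ℝ | minDot (D j) e = -1} ∪ {0}) ⊆
      maximalNabla D j := by
  have hne i : (D i).Nonempty := ⟨0, h0 i⟩
  have hΔne : (∑ i, D i).Nonempty := ⟨0, (Set.mem_fintype_sum _ _).2 ⟨0, h0, by simp⟩⟩
  refine convexHull_min (Set.union_subset (fun e ⟨he, hej⟩ => ?_) ?_)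
    (convex_maximalNabla hD hne j)
  · exact mem_maximalNabla_of_minDot_eq_neg_one hD h0
      ((mem_dualSet_iff hΔ hΔne).1 (extremePoints_subset he)) hej
  · exact Set.singleton_subset_iff.2 (zero_mem_maximalNabla hne j)

theorem maximalNabla_subset_convexHull (hD : ∀ i, IsCompact (D i))
    (h0 : ∀ i, (0 : Fin d → ℝ) ∈ D i) (hΔ : IsCompact (∑ i, D i))
    (hint : (0 : Fin d → ℝ) ∈ interior (∑ i, D i))
    (hK : convexHull ℝ ((dualSet (∑ i, D i)).extremePoints ℝ) = dualSet (∑ i, D i)) (j : ι) :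
    maximalNabla D j ⊆
      convexHull ℝ ({e ∈ (dualSet (∑ i, D i)).extremePoints ℝ | minDot (D j) e = -1} ∪ {0}) := by
  have hne i : (D i).Nonempty := ⟨0, h0 i⟩
  have hΔne : (∑ i, D i).Nonempty := ⟨0, interior_subset hint⟩
  intro y hy
  rcases eq_or_ne y 0 with rfl | hy0
  · exact subset_convexHull ℝ _ (Or.inr rfl)
  set m := minDot (D j) y with hm_def
  have hm : minDot (∑ i, D i) y = m := minDot_sum_eq_of_nonneg hD h0 hy.2
  have hm_neg : m < 0 := hm ▸ minDot_neg_of_zero_mem_interior hΔ hint hy0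
  have hscale : 0 ≤ -m⁻¹ := neg_nonneg.2 (inv_nonpos.2 hm_neg.le)
  have hy'j : minDot (D j) ((-m⁻¹) • y) = -1 := by
    rw [minDot_smul hscale, ← hm_def, neg_mul, inv_mul_cancel₀ hm_neg.ne]
  have hy'K : (-m⁻¹) • y ∈ convexHull ℝ ((dualSet (∑ i, D i)).extremePoints ℝ) := by
    rw [hK, mem_dualSet_iff hΔ hΔne, minDot_smul hscale, hm, neg_mul,
      inv_mul_cancel₀ hm_neg.ne]
  have hbound : ∀ e ∈ (dualSet (∑ i, D i)).extremePoints ℝ, -1 ≤ minDot (D j) e :=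
    fun e he => ((mem_dualSet_iff hΔ hΔne).1 (extremePoints_subset he)).trans
      (by simpa using minDot_sum_le_sum_minDot hD h0 {j} e)
  have hface := mem_convexHull_setOf_eq_of_concaveOn
    ((concaveOn_minDot (hD j) (hne j)).subset (Set.subset_univ _) (convex_convexHull ℝ _))
    hbound hy'K hy'j.le
  have hy_eq : y = (-m) • ((-m⁻¹) • y) := by
    rw [smul_smul, neg_mul_neg, mul_inv_cancel₀ hm_neg.ne, one_smul]
  rw [hy_eq]
  refine (convex_convexHull ℝ _).smul_mem_of_zero_mem
    (subset_convexHull ℝ _ (Set.mem_union_right _ (Set.mem_singleton 0)))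
    (convexHull_mono Set.subset_union_left hface) ⟨?_, ?_⟩
  · exact neg_nonneg.2 hm_neg.le
  · linarith [hy.1]

end NefPartition

theorem nabla_eq_maximal_set_general {d r : ℕ}
    (Δ : Set (Fin d → ℝ)) (hΔ : IsReflexivePolytope Δ)
    (D : Fin r → Set (Fin d → ℝ)) (hlat : ∀ i, IsLatticePolytope (D i))
    (h0 : ∀ i, (0 : Fin d → ℝ) ∈ D i) (hsum : Δ = ∑ i, D i)
    (E : Fin r → Set (Fin d → ℝ))
    (hE : ∀ i, E i = {e ∈ Set.extremePoints ℝ (dualSet Δ) | minDot (D i) e = -1})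
    (N : Fin r → Set (Fin d → ℝ))
    (hN : ∀ i, N i = convexHull ℝ (E i ∪ {0})) :
    ∀ j, N j = {y : Fin d → ℝ |
      (∀ x ∈ D j, -1 ≤ dotp x y) ∧ ∀ i, i ≠ j → ∀ x ∈ D i, 0 ≤ dotp x y} := by
  intro j
  subst hsum
  obtain ⟨hΔlat, hint, hdual⟩ := hΔ
  have hD i : IsCompact (D i) := (hlat i).isCompact
  rw [hN, hE, setOf_pairing_eq_maximalNabla hD fun i => ⟨0, h0 i⟩]
  exact (convexHull_subset_maximalNabla hD h0 hΔlat.isCompact j).antisymm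
    (maximalNabla_subset_convexHull hD h0 hΔlat.isCompact hint hdual.convexHull_extremePoints j)

/-- maximality of the `∇_j`: `∇_j` equals the set of all `y` satisfying
the pairing inequalities `⟨Δ_i, y⟩ ≥ -δ_{ij}` (Remark 3.3). -/
theorem nabla_eq_maximal_set {d r : ℕ} (hd : 1 ≤ d)
    (Δ : Set (Fin d → ℝ)) (hΔ : IsReflexivePolytope Δ)
    (D : Fin r → Set (Fin d → ℝ)) (hlat : ∀ i, IsLatticePolytope (D i))
    (h0 : ∀ i, (0 : Fin d → ℝ) ∈ D i) (hsum : Δ = ∑ i, D i)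
    (hnef : ∀ i j, i ≠ j → D i ∩ D j = {0})
    (E : Fin r → Set (Fin d → ℝ))
    (hE : ∀ i, E i = {e ∈ Set.extremePoints ℝ (dualSet Δ) | minDot (D i) e = -1})
    (N : Fin r → Set (Fin d → ℝ))
    (hN : ∀ i, N i = convexHull ℝ (E i ∪ {0})) :
    ∀ j, N j = {y : Fin d → ℝ |
      (∀ x ∈ D j, -1 ≤ dotp x y) ∧ ∀ i, i ≠ j → ∀ x ∈ D i, 0 ≤ dotp x y} :=
  nabla_eq_maximal_set_general Δ hΔ D hlat h0 hsum E hE N hN
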